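/- arXiv:1308.0576 — 5 statements merged into one kernel-verified Lean document; each statement's English description precedes it below -/
import Mathlib

section
/- Let P be a probability measure on path space satisfying the forward Markov property: for all t ∈ [0,1] and B ∈ 𝒜_{[t,1]}, P(B | 𝒜_{[0,t]}) = P(B | X_t) a.s. Then for all 0 ≤ s ≤ u ≤ 1 and all A ∈ 𝒜_{[0,s]}, C ∈ 𝒜_{[u,1]}, one has P(A ∩ C | 𝒜_{[s,u]}) = P(A | X_s) P(C | X_u) a.s. -/
open MeasureTheory

noncomputable section

variable {Ω 𝒳 : Type*}

/-- σ-algebra generated by the canonical process on the time window `[s,u]`. -/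
def window [MeasurableSpace 𝒳] (X : ℝ → Ω → 𝒳) (s u : ℝ) : MeasurableSpace Ω :=
  ⨆ r ∈ Set.Icc s u, MeasurableSpace.comap (X r) inferInstance

/-- σ-algebra generated by the position at time `t`. -/
def at1 [MeasurableSpace 𝒳] (X : ℝ → Ω → 𝒳) (t : ℝ) : MeasurableSpace Ω :=
  MeasurableSpace.comap (X t) inferInstance

/-- σ-algebra generated by the pair of positions at times `s` and `u`. -/
def at2 [MeasurableSpace 𝒳] (X : ℝ → Ω → 𝒳) (s u : ℝ) : MeasurableSpace Ω :=
  MeasurableSpace.comap (fun ω => (X s ω, X u ω)) inferInstance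

/-- Indicator function of an event, real-valued. -/
def ind (A : Set Ω) : Ω → ℝ := A.indicator (fun _ => 1)

/-- The two-sided (symmetric) Markov property: for every time `t ∈ [0,1]`, past and future
events are conditionally independent given the present position `X t`. -/
def IsMarkov [MeasurableSpace Ω] [MeasurableSpace 𝒳]
    (X : ℝ → Ω → 𝒳) (P : Measure Ω) : Prop :=
  ∀ t ∈ Set.Icc (0:ℝ) 1, ∀ A B : Set Ω,
    MeasurableSet[window X 0 t] A → MeasurableSet[window X t 1] B →
    P[ind (A ∩ B) | at1 X t] =ᵐ[P] P[ind A | at1 X t] * P[ind B | at1 X t]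

/-- The reciprocal property: for all `0 ≤ s ≤ u ≤ 1`, the events inside `[s,u]` and those
outside are conditionally independent given the pair `(X s, X u)`. -/
def IsReciprocal [MeasurableSpace Ω] [MeasurableSpace 𝒳]
    (X : ℝ → Ω → 𝒳) (P : Measure Ω) : Prop :=
  ∀ s u : ℝ, 0 ≤ s → s ≤ u → u ≤ 1 → ∀ A B C : Set Ω,
    MeasurableSet[window X 0 s] A → MeasurableSet[window X s u] B →
    MeasurableSet[window X u 1] C →
    P[ind (A ∩ B ∩ C) | at2 X s u] =ᵐ[P]
      P[ind (A ∩ C) | at2 X s u] * P[ind B | at2 X s u]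

/-
For a past event `A` and `B ∈ 𝒜_{[s,u]} ⊆ 𝒜_{[s,1]}`, the self-adjointness of conditional
expectation and the forward Markov property at `s` give
`∫_B P[A | X s] = ∫_A P[B | X s] = ∫_A P[B | 𝒜_{[0,s]}] = P(A ∩ B)`, so `P[A | 𝒜_{[s,u]}] = P[A | X s]`.
Conditioning `A ∩ C` first on `𝒜_{[0,u]}`, the Markov property at `u` turns it into
`1_A P[C | X u]`, and the `𝒜_{[s,u]}`-measurable factor `P[C | X u]` pulls out of the
conditional expectation on `𝒜_{[s,u]}`, leaving `P[A | 𝒜_{[s,u]}] P[C | X u]`.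
-/

section Window

variable [MeasurableSpace 𝒳] {X : ℝ → Ω → 𝒳}

lemma window_le [MeasurableSpace Ω] (hX : ∀ t, Measurable (X t)) (s u : ℝ) :
    window X s u ≤ ‹MeasurableSpace Ω› :=
  iSup₂_le fun r _ => (hX r).comap_le

lemma window_mono {s u s' u' : ℝ} (hs : s' ≤ s) (hu : u ≤ u') :
    window X s u ≤ window X s' u' :=
  iSup₂_le fun r hr => le_iSup₂ (f := fun r (_ : r ∈ Set.Icc s' u') =>
    MeasurableSpace.comap (X r) inferInstance) r ⟨hs.trans hr.1, hr.2.trans hu⟩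

lemma at1_le_window {s t u : ℝ} (hst : s ≤ t) (htu : t ≤ u) :
    at1 X t ≤ window X s u :=
  le_iSup₂ (f := fun r (_ : r ∈ Set.Icc s u) =>
    MeasurableSpace.comap (X r) inferInstance) t ⟨hst, htu⟩

end Window

lemma ind_inter (A C : Set Ω) : ind (A ∩ C) = A.indicator (ind C) :=
  (Set.indicator_indicator A C _).symm

lemma indicator_eq_ind_mul (A : Set Ω) (h : Ω → ℝ) : A.indicator h = ind A * h := by
  ext ω
  by_cases hω : ω ∈ A <;> simp [ind, hω]

section CondExp

variable {m ℱ 𝒢 : MeasurableSpace Ω} [mΩ : MeasurableSpace Ω] {μ : Measure Ω} [IsFiniteMeasure μ]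
  {A B C : Set Ω}

lemma integrable_ind (hA : MeasurableSet A) : Integrable (ind A) μ :=
  (integrable_const 1).indicator hA

lemma condExp_indicator_of_stronglyMeasurable {h : Ω → ℝ} (hA : MeasurableSet A)
    (hh : StronglyMeasurable[m] h) (hint : Integrable h μ) :
    μ[A.indicator h | m] =ᵐ[μ] μ[ind A | m] * h := by
  rw [indicator_eq_ind_mul]
  exact condExp_mul_of_stronglyMeasurable_right hh
    (indicator_eq_ind_mul A h ▸ hint.indicator hA) (integrable_ind hA)

lemma setIntegral_eq_integral_condExp_ind_mul (hm : m ≤ mΩ) {h : Ω → ℝ}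
    (hB : MeasurableSet B) (hh : StronglyMeasurable[m] h) (hint : Integrable h μ) :
    ∫ ω in B, h ω ∂μ = ∫ ω, (μ[ind B | m] * h) ω ∂μ := calc
  ∫ ω in B, h ω ∂μ = ∫ ω, (μ[B.indicator h | m]) ω ∂μ := by
    rw [integral_condExp hm, integral_indicator hB]
  _ = ∫ ω, (μ[ind B | m] * h) ω ∂μ :=
    integral_congr_ae (condExp_indicator_of_stronglyMeasurable hB hh hint)

lemma setIntegral_condExp_ind_comm (hm : m ≤ mΩ) (hA : MeasurableSet A) (hB : MeasurableSet B) :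
    ∫ ω in B, (μ[ind A | m]) ω ∂μ = ∫ ω in A, (μ[ind B | m]) ω ∂μ := by
  rw [setIntegral_eq_integral_condExp_ind_mul hm hB stronglyMeasurable_condExp integrable_condExp,
    setIntegral_eq_integral_condExp_ind_mul hm hA stronglyMeasurable_condExp integrable_condExp,
    mul_comm]

lemma condExp_ind_eq_of_markov (hℱ : ℱ ≤ mΩ) (hm𝒢 : m ≤ 𝒢) (h𝒢 : 𝒢 ≤ mΩ)
    (hmarkov : ∀ B, MeasurableSet[𝒢] B → μ[ind B | ℱ] =ᵐ[μ] μ[ind B | m])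
    (hA : MeasurableSet[ℱ] A) :
    μ[ind A | 𝒢] =ᵐ[μ] μ[ind A | m] := by
  refine (ae_eq_condExp_of_forall_setIntegral_eq h𝒢 (integrable_ind (hℱ _ hA))
    (fun _ _ _ => integrable_condExp.integrableOn) (fun B hB _ => ?_)
    (stronglyMeasurable_condExp.mono hm𝒢).aestronglyMeasurable).symm
  calc ∫ ω in B, (μ[ind A | m]) ω ∂μ
      = ∫ ω in A, (μ[ind B | m]) ω ∂μ :=
        setIntegral_condExp_ind_comm (hm𝒢.trans h𝒢) (hℱ _ hA) (h𝒢 _ hB)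
    _ = ∫ ω in A, (μ[ind B | ℱ]) ω ∂μ := setIntegral_congr_ae (hℱ _ hA)
        (by filter_upwards [hmarkov B hB] with ω hω _ using hω.symm)
    _ = ∫ ω in A, ind B ω ∂μ := setIntegral_condExp hℱ (integrable_ind (h𝒢 _ hB)) hA
    _ = ∫ ω in B, ind A ω ∂μ := by
        simp only [ind, setIntegral_indicator (h𝒢 _ hB), setIntegral_indicator (hℱ _ hA),
          Set.inter_comm]

lemma condExp_ind_inter_eq_mul_of_markov (h𝒢ℱ : 𝒢 ≤ ℱ) (hℱ : ℱ ≤ mΩ) (hm𝒢 : m ≤ 𝒢)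
    (hA : MeasurableSet[ℱ] A) (hC : MeasurableSet C)
    (hmarkov : μ[ind C | ℱ] =ᵐ[μ] μ[ind C | m]) :
    μ[ind (A ∩ C) | 𝒢] =ᵐ[μ] μ[ind A | 𝒢] * μ[ind C | m] := by
  have hpast : μ[ind (A ∩ C) | ℱ] =ᵐ[μ] A.indicator (μ[ind C | m]) := by
    rw [ind_inter]
    filter_upwards [condExp_indicator (integrable_ind hC) hA, hmarkov] with ω hω hω'
    simp only [hω, Set.indicator, hω']
  calc μ[ind (A ∩ C) | 𝒢]
      =ᵐ[μ] μ[μ[ind (A ∩ C) | ℱ] | 𝒢] := (condExp_condExp_of_le h𝒢ℱ hℱ).symm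
    _ =ᵐ[μ] μ[A.indicator (μ[ind C | m]) | 𝒢] := condExp_congr_ae hpast
    _ =ᵐ[μ] μ[ind A | 𝒢] * μ[ind C | m] := condExp_indicator_of_stronglyMeasurable (hℱ _ hA)
        (stronglyMeasurable_condExp.mono hm𝒢) integrable_condExp

end CondExp

/-- the forward Markov property implies that past and future are conditionally
independent given the inner trajectory, with conditional probabilities depending only on the
boundary positions. -/
theorem forward_markov_implies_past_future_indep
    [MeasurableSpace Ω] [MeasurableSpace 𝒳]
    (X : ℝ → Ω → 𝒳) (hX : ∀ t, Measurable (X t))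
    (P : Measure Ω) [IsProbabilityMeasure P]
    (hfwd : ∀ t ∈ Set.Icc (0:ℝ) 1, ∀ B : Set Ω, MeasurableSet[window X t 1] B →
      P[ind B | window X 0 t] =ᵐ[P] P[ind B | at1 X t]) :
    ∀ s u : ℝ, 0 ≤ s → s ≤ u → u ≤ 1 → ∀ A C : Set Ω,
      MeasurableSet[window X 0 s] A → MeasurableSet[window X u 1] C →
      P[ind (A ∩ C) | window X s u] =ᵐ[P] P[ind A | at1 X s] * P[ind C | at1 X u] := by
  intro s u hs hsu hu A C hA hC
  have hbackward : P[ind A | window X s u] =ᵐ[P] P[ind A | at1 X s] :=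
    condExp_ind_eq_of_markov (window_le hX 0 s) (at1_le_window le_rfl hsu) (window_le hX s u)
      (fun B hB => hfwd s ⟨hs, hsu.trans hu⟩ B (window_mono le_rfl hu _ hB)) hA
  have hfactor : P[ind (A ∩ C) | window X s u] =ᵐ[P]
      P[ind A | window X s u] * P[ind C | at1 X u] :=
    condExp_ind_inter_eq_mul_of_markov (window_mono hs le_rfl) (window_le hX 0 u)
      (at1_le_window hsu le_rfl) (window_mono le_rfl hsu _ hA) (window_le hX u 1 _ hC)
      (hfwd u ⟨hs.trans hsu, hu⟩ C hC)
  exact hfactor.trans (hbackward.mul .rfl)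
end
end

section
/- Let R be a probability measure on a space Ω with a σ-algebra generated by a random variable X_t, and suppose Z = α β is R-integrable with α, β ≥ 0 measurable, and E_R(αβ | X_t) = E_R(α | X_t) E_R(β | X_t) on the event where the product is positive. Set P = Z·R (assuming E_R Z = 1). Then P-a.s., α and β are R(·|X_t)-integrable and 0 < E_R(αβ | X_t) = E_R(α | X_t) E_R(β | X_t) P-a.s., and R-a.s. E_R(αβ | X_t) = 1_{E_R(α|X_t)E_R(β|X_t) < ∞} E_R(α|X_t) E_R(β|X_t). -/
/-!
Conditional independence of `𝒢₁` and `𝒢₂` given `σ(X_t)` makes `α` and `β` independent under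
the conditional kernel `condExpKernel R σ(X_t) ω` for `R`-a.e. `ω`, so that
`E(αβ | X_t) = E(α | X_t) E(β | X_t)` `R`-a.s. By the tower property `E(αβ | X_t)` has
`R`-integral `1`, hence is finite `R`-a.s., and `P` does not charge the `σ(X_t)`-measurable set
`{E(αβ | X_t) = 0}`, on which `αβ` integrates to `0`. A product in `[0, ∞]` that is positive and
finite has finite factors.
-/

open MeasureTheory ProbabilityTheory

noncomputable section

variable {Ω 𝒳 : Type*}

/-- Conditional expectation of a `[0,∞]`-valued function given a sub-σ-algebra, defined via
the conditional expectation kernel. -/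
def condExpNN (m : MeasurableSpace Ω) [MeasurableSpace Ω] [StandardBorelSpace Ω] [Nonempty Ω]
    (R : Measure Ω) [IsFiniteMeasure R] (f : Ω → ENNReal) : Ω → ENNReal :=
  fun ω => ∫⁻ x, f x ∂(condExpKernel R m ω)

open scoped ENNReal

lemma condIndepFun_of_condIndep {β γ : Type*} [MeasurableSpace β] [MeasurableSpace γ]
    {m m₁ m₂ : MeasurableSpace Ω} [mΩ : MeasurableSpace Ω] [StandardBorelSpace Ω] {hm : m ≤ mΩ}
    {μ : Measure Ω} [IsFiniteMeasure μ] {f : Ω → β} {g : Ω → γ}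
    (h : CondIndep m m₁ m₂ hm μ) (hf : Measurable[m₁] f) (hg : Measurable[m₂] g) :
    CondIndepFun m hm f g μ :=
  condIndep_of_condIndep_of_le_right (condIndep_of_condIndep_of_le_left h hf.comap_le)
    hg.comap_le

section condExpNN

variable {m : MeasurableSpace Ω} [mΩ : MeasurableSpace Ω] [StandardBorelSpace Ω] [Nonempty Ω]
  {μ : Measure Ω} [IsFiniteMeasure μ] {f g : Ω → ℝ≥0∞}

lemma measurable_condExpNN (hf : Measurable f) : Measurable[m] (condExpNN m μ f) :=
  hf.lintegral_kernel

lemma setLIntegral_condExpNN (hm : m ≤ mΩ) (hf : Measurable f) {s : Set Ω}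
    (hs : MeasurableSet[m] s) :
    ∫⁻ ω in s, condExpNN m μ f ω ∂μ = ∫⁻ ω in s, f ω ∂μ := by
  have hdiag : Measurable[mΩ, m.prod mΩ] Function.diag :=
    (measurable_id'' hm).prodMk measurable_id
  calc ∫⁻ ω in s, condExpNN m μ f ω ∂μ
      = ∫⁻ ω in s, ∫⁻ x in Set.univ, f x ∂condExpKernel μ m ω ∂μ.trim hm := by
        rw [← setLIntegral_trim hm (measurable_condExpNN hf) hs]
        simp only [Measure.restrict_univ, condExpNN]
    _ = ∫⁻ p in s ×ˢ Set.univ, f p.2 ∂(μ.trim hm ⊗ₘ condExpKernel μ m) :=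
        (Measure.setLIntegral_compProd (hf.comp measurable_snd) hs MeasurableSet.univ).symm
    _ = ∫⁻ ω in s, f ω ∂μ := by
        rw [compProd_trim_condExpKernel, @setLIntegral_map _ _ mΩ (m.prod mΩ) _ (fun p => f p.2) _ _
          (hs.prod MeasurableSet.univ) (hf.comp measurable_snd) hdiag]
        simp [Set.preimage]

lemma lintegral_condExpNN (hm : m ≤ mΩ) (hf : Measurable f) :
    ∫⁻ ω, condExpNN m μ f ω ∂μ = ∫⁻ ω, f ω ∂μ := by
  simpa using setLIntegral_condExpNN (μ := μ) hm hf MeasurableSet.univ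

lemma ae_lt_top_condExpNN (hm : m ≤ mΩ) (hf : Measurable f) (hfi : ∫⁻ ω, f ω ∂μ ≠ ∞) :
    ∀ᵐ ω ∂μ, condExpNN m μ f ω < ∞ :=
  ae_lt_top ((measurable_condExpNN hf).mono hm le_rfl) (by rwa [lintegral_condExpNN hm hf])

lemma ae_withDensity_condExpNN_pos (hm : m ≤ mΩ) (hf : Measurable f) :
    ∀ᵐ ω ∂μ.withDensity f, 0 < condExpNN m μ f ω := by
  set s := {ω | condExpNN m μ f ω = 0}
  have hs : MeasurableSet[m] s := measurable_condExpNN hf (measurableSet_singleton 0)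
  have hs_null : μ.withDensity f s = 0 := by
    rw [withDensity_apply _ (hm s hs), ← setLIntegral_condExpNN hm hf hs]
    exact setLIntegral_eq_zero (hm s hs) fun ω hω => hω
  exact measure_eq_zero_iff_ae_notMem.1 hs_null |>.mono fun ω hω => pos_iff_ne_zero.2 hω

lemma condExpNN_mul_ae_eq_of_condIndepFun {hm : m ≤ mΩ} (h : CondIndepFun m hm f g μ)
    (hf : Measurable f) (hg : Measurable g) :
    condExpNN m μ (fun ω => f ω * g ω) =ᵐ[μ] fun ω => condExpNN m μ f ω * condExpNN m μ g ω := by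
  filter_upwards [ae_of_ae_trim hm ((condIndepFun_iff_map_prod_eq_prod_map_map hf hg).1 h)]
    with ω hω
  have hindep : IndepFun f g (condExpKernel μ m ω) :=
    (indepFun_iff_map_prod_eq_prod_map_map hf.aemeasurable hg.aemeasurable).2 <| by
      simpa only [Kernel.map_apply _ (hf.prodMk hg), Kernel.prod_apply,
        Kernel.map_apply _ hf, Kernel.map_apply _ hg] using hω
  exact lintegral_mul_eq_lintegral_mul_lintegral_of_indepFun'' hf.aemeasurable hg.aemeasurable
    hindep

end condExpNN

/-- the integration lemma about conditionally independent nonnegative factors.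
If `α` is `𝒢₁`-measurable, `β` is `𝒢₂`-measurable, `𝒢₁` and `𝒢₂` are conditionally independent
given `σ(X_t)` under `R`, and `Z = αβ` is `R`-integrable with `P = Z·R` a probability measure,
then `P`-a.s. `α` and `β` are conditionally integrable and
`0 < E_R(αβ|X_t) = E_R(α|X_t)E_R(β|X_t)`, while `R`-a.s.
`E_R(αβ|X_t) = 1_{E_R(α|X_t)E_R(β|X_t)<∞} E_R(α|X_t)E_R(β|X_t)`. -/
theorem conditionally_independent_factors_integration
    (𝒢₁ 𝒢₂ : MeasurableSpace Ω)
    [MeasurableSpace Ω] [StandardBorelSpace Ω] [Nonempty Ω] [MeasurableSpace 𝒳]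
    (Xt : Ω → 𝒳) (hXt : Measurable Xt)
    (h𝒢₁ : 𝒢₁ ≤ ‹MeasurableSpace Ω›) (h𝒢₂ : 𝒢₂ ≤ ‹MeasurableSpace Ω›)
    (R : Measure Ω) [IsProbabilityMeasure R]
    (hindep : CondIndep (MeasurableSpace.comap Xt inferInstance) 𝒢₁ 𝒢₂ hXt.comap_le R)
    (α β : Ω → ENNReal) (hα : Measurable[𝒢₁] α) (hβ : Measurable[𝒢₂] β)
    (hint : ∫⁻ ω, α ω * β ω ∂ R = 1)
    (P : Measure Ω) (hP : P = R.withDensity (fun ω => α ω * β ω)) :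
    (∀ᵐ ω ∂P,
        condExpNN (MeasurableSpace.comap Xt inferInstance) R α ω < ⊤ ∧
        condExpNN (MeasurableSpace.comap Xt inferInstance) R β ω < ⊤) ∧
    (∀ᵐ ω ∂P,
        0 < condExpNN (MeasurableSpace.comap Xt inferInstance) R (fun x => α x * β x) ω ∧
        condExpNN (MeasurableSpace.comap Xt inferInstance) R (fun x => α x * β x) ω =
          condExpNN (MeasurableSpace.comap Xt inferInstance) R α ω *
          condExpNN (MeasurableSpace.comap Xt inferInstance) R β ω) ∧
    (∀ᵐ ω ∂ R,
        condExpNN (MeasurableSpace.comap Xt inferInstance) R (fun x => α x * β x) ω =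
          if condExpNN (MeasurableSpace.comap Xt inferInstance) R α ω *
              condExpNN (MeasurableSpace.comap Xt inferInstance) R β ω < ⊤ then
            condExpNN (MeasurableSpace.comap Xt inferInstance) R α ω *
            condExpNN (MeasurableSpace.comap Xt inferInstance) R β ω
          else 0) := by
  have hαm : Measurable α := hα.mono h𝒢₁ le_rfl
  have hβm : Measurable β := hβ.mono h𝒢₂ le_rfl
  have hαβ : Measurable fun ω => α ω * β ω := hαm.mul hβm
  have hprod :=
    condExpNN_mul_ae_eq_of_condIndepFun (condIndepFun_of_condIndep hindep hα hβ) hαm hβm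
  have hfin := ae_lt_top_condExpNN (μ := R) hXt.comap_le hαβ (by simp [hint])
  have hpos := ae_withDensity_condExpNN_pos (μ := R) hXt.comap_le hαβ
  subst hP
  have hP_ac := withDensity_absolutelyContinuous R fun ω => α ω * β ω
  refine ⟨?_, ?_, ?_⟩
  · filter_upwards [hP_ac.ae_le hfin, hP_ac.ae_le hprod, hpos] with ω hω_fin hω_prod hω_pos
    rw [hω_prod] at hω_fin hω_pos
    obtain ⟨hα_pos, hβ_pos⟩ := ENNReal.mul_pos_iff.1 hω_pos
    exact ⟨ENNReal.lt_top_of_mul_ne_top_left hω_fin.ne hβ_pos.ne',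
      ENNReal.lt_top_of_mul_ne_top_right hω_fin.ne hα_pos.ne'⟩
  · filter_upwards [hP_ac.ae_le hprod, hpos] with ω hω_prod hω_pos
    exact ⟨hω_pos, hω_prod⟩
  · filter_upwards [hfin, hprod] with ω hω_fin hω_prod
    rw [← hω_prod, if_pos hω_fin]
end
end

section
/- Let R be a reciprocal measure with everywhere-defined measurable bridges, and let π be a probability measure on 𝒳² with π ≪ R_{01}. Then the mixture P = ∫ R^{xy} π(dxdy) is absolutely continuous with respect to R and dP/dR = (dπ/dR_{01})(X_0, X_1), R-a.s. Conversely, if P = h(X_0, X_1) · R for some nonnegative measurable h with E_R h(X_0,X_1) = 1, then P = ∫ R^{xy} π(dxdy) with π(dxdy) = h(x,y) R_{01}(dxdy). -/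
open MeasureTheory

noncomputable section

variable {Ω 𝒳 : Type*}

/-- `B` is an (everywhere-defined, measurable) bridge system for `R`: each `B (x,y)` is a
probability measure pinned at endpoints `(x,y)`, `B` is measurable, and `R` is the mixture of
its bridges with respect to its own endpoint marginal `R_{01}`. -/
def IsBridgeSystem [MeasurableSpace Ω] [MeasurableSpace 𝒳]
    (X : ℝ → Ω → 𝒳) (R : Measure Ω) (B : 𝒳 × 𝒳 → Measure Ω) : Prop :=
  Measurable B ∧ (∀ p, IsProbabilityMeasure (B p)) ∧
  (∀ p : 𝒳 × 𝒳, B p {ω | X 0 ω = p.1 ∧ X 1 ω = p.2} = 1) ∧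
  R = (R.map (fun ω => (X 0 ω, X 1 ω))).bind B

/-! Each bridge `R^{xy}` is carried by `{(X_0, X_1) = (x, y)}`, where `h(X_0, X_1)` is the
constant `h(x, y)`. Hence tilting the bridge by `h(X_0, X_1)` just multiplies it by `h(x, y)`, and
mixing the bridges against `h · R_{01}` gives `h(X_0, X_1) · R`; the first half is the case
`h = dπ/dR_{01}`. -/

section PinnedMixtures

variable [MeasurableSpace Ω] [MeasurableSpace 𝒳] {e : Ω → 𝒳}

/- The fibre `e ⁻¹' {p}` need not be measurable, so its full (outer) measure is only
transferred to the measurable sets containing it. -/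
lemma ae_comp_eq_of_measure_fiber_eq_one {β : Type*} [MeasurableSpace β]
    [MeasurableSingletonClass β] {ν : Measure Ω} [IsProbabilityMeasure ν] (he : Measurable e)
    {p : 𝒳} (hp : ν (e ⁻¹' {p}) = 1) {h : 𝒳 → β} (hh : Measurable h) :
    ∀ᵐ ω ∂ν, h (e ω) = h p := by
  have hmeas : MeasurableSet (e ⁻¹' (h ⁻¹' {h p})) := he (hh (measurableSet_singleton _))
  have hfull : ν (e ⁻¹' (h ⁻¹' {h p})) = 1 :=
    le_antisymm prob_le_one (hp.ge.trans (measure_mono fun ω hω => by simp_all))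
  exact (prob_compl_eq_zero_iff hmeas).2 hfull

lemma withDensity_comp_eq_smul_of_measure_fiber_eq_one {ν : Measure Ω}
    [IsProbabilityMeasure ν] (he : Measurable e) {p : 𝒳} (hp : ν (e ⁻¹' {p}) = 1)
    {h : 𝒳 → ENNReal} (hh : Measurable h) :
    ν.withDensity (h ∘ e) = h p • ν := by
  rw [← withDensity_const]
  exact withDensity_congr_ae (ae_comp_eq_of_measure_fiber_eq_one he hp hh)

lemma bind_withDensity_eq_withDensity_bind {B : 𝒳 → Measure Ω} (hBm : Measurable B)
    [∀ p, IsProbabilityMeasure (B p)] (hpin : ∀ p, B p (e ⁻¹' {p}) = 1) (he : Measurable e)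
    (μ : Measure 𝒳) {h : 𝒳 → ENNReal} (hh : Measurable h) :
    (μ.withDensity h).bind B = (μ.bind B).withDensity (h ∘ e) := by
  ext s hs
  have hBs : Measurable fun p => B p s := (Measure.measurable_coe hs).comp hBm
  rw [Measure.bind_apply hs hBm.aemeasurable, lintegral_withDensity_eq_lintegral_mul _ hh hBs,
    withDensity_apply _ hs, ← lintegral_indicator hs,
    Measure.lintegral_bind hBm.aemeasurable ((hh.comp he).indicator hs).aemeasurable]
  refine lintegral_congr fun p => ?_
  rw [lintegral_indicator hs, ← withDensity_apply _ hs,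
    withDensity_comp_eq_smul_of_measure_fiber_eq_one he (hpin p) hh]
  rfl

lemma bind_eq_withDensity_rnDeriv_comp {B : 𝒳 → Measure Ω} (hBm : Measurable B)
    [∀ p, IsProbabilityMeasure (B p)] (hpin : ∀ p, B p (e ⁻¹' {p}) = 1) (he : Measurable e)
    {μ π : Measure 𝒳} [π.HaveLebesgueDecomposition μ] (hπ : π ≪ μ) :
    π.bind B = (μ.bind B).withDensity (π.rnDeriv μ ∘ e) := by
  conv_lhs => rw [← Measure.withDensity_rnDeriv_eq π μ hπ]
  exact bind_withDensity_eq_withDensity_bind hBm hpin he μ (Measure.measurable_rnDeriv π μ)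

end PinnedMixtures

theorem dominated_mixtures_of_bridges_general
    [MeasurableSpace Ω] [MeasurableSpace 𝒳]
    (X : ℝ → Ω → 𝒳) (hX : ∀ t, Measurable (X t))
    (R : Measure Ω) [IsProbabilityMeasure R]
    (B : 𝒳 × 𝒳 → Measure Ω) (hB : IsBridgeSystem X R B) :
    (∀ π : Measure (𝒳 × 𝒳), IsProbabilityMeasure π →
      π ≪ R.map (fun ω => (X 0 ω, X 1 ω)) →
      (π.bind B ≪ R ∧
        (fun ω => (π.bind B).rnDeriv R ω) =ᵐ[R]
          fun ω => π.rnDeriv (R.map (fun ω' => (X 0 ω', X 1 ω'))) (X 0 ω, X 1 ω))) ∧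
    (∀ h : 𝒳 × 𝒳 → ENNReal, Measurable h →
      ∫⁻ p, h p ∂(R.map (fun ω => (X 0 ω, X 1 ω))) = 1 →
      R.withDensity (fun ω => h (X 0 ω, X 1 ω)) =
        ((R.map (fun ω => (X 0 ω, X 1 ω))).withDensity h).bind B) := by
  obtain ⟨hBm, hBprob, hpin, hR⟩ := hB
  have he : Measurable fun ω => (X 0 ω, X 1 ω) := (hX 0).prodMk (hX 1)
  have hpin' : ∀ p, B p ((fun ω => (X 0 ω, X 1 ω)) ⁻¹' {p}) = 1 := fun p => by
    simpa only [Set.preimage, Set.mem_singleton_iff, Prod.ext_iff] using hpin p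
  refine ⟨fun π _ hπ => ?_, fun h hh _ => ?_⟩
  · have hbind := bind_eq_withDensity_rnDeriv_comp hBm hpin' he hπ
    rw [← hR] at hbind
    rw [hbind]
    exact ⟨withDensity_absolutelyContinuous _ _,
      Measure.rnDeriv_withDensity R ((Measure.measurable_rnDeriv _ _).comp he)⟩
  · rw [bind_withDensity_eq_withDensity_bind hBm hpin' he _ hh, ← hR]
    rfl

/-- a mixture `P = ∫ R^{xy} π(dxdy)` with `π ≪ R_{01}` is dominated by `R` with
density `dP/dR = (dπ/dR_{01})(X_0, X_1)`; conversely every `P = h(X_0,X_1)·R` is the mixture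
of the bridges of `R` by `π(dxdy) = h(x,y) R_{01}(dxdy)`. -/
theorem dominated_mixtures_of_bridges
    [MeasurableSpace Ω] [MeasurableSpace 𝒳]
    (X : ℝ → Ω → 𝒳) (hX : ∀ t, Measurable (X t))
    (R : Measure Ω) [IsProbabilityMeasure R] (hRrec : IsReciprocal X R)
    (B : 𝒳 × 𝒳 → Measure Ω) (hB : IsBridgeSystem X R B) :
    (∀ π : Measure (𝒳 × 𝒳), IsProbabilityMeasure π →
      π ≪ R.map (fun ω => (X 0 ω, X 1 ω)) →
      (π.bind B ≪ R ∧
        (fun ω => (π.bind B).rnDeriv R ω) =ᵐ[R]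
          fun ω => π.rnDeriv (R.map (fun ω' => (X 0 ω', X 1 ω'))) (X 0 ω, X 1 ω))) ∧
    (∀ h : 𝒳 × 𝒳 → ENNReal, Measurable h →
      ∫⁻ p, h p ∂(R.map (fun ω => (X 0 ω, X 1 ω))) = 1 →
      R.withDensity (fun ω => h (X 0 ω, X 1 ω)) =
        ((R.map (fun ω => (X 0 ω, X 1 ω))).withDensity h).bind B) :=
  dominated_mixtures_of_bridges_general X hX R B hB
end
end

section
/- Let R be a Markov probability measure, and let P = h(X_0, X_1) · R (for nonnegative measurable h, E_R h = 1) be Markov. Suppose there exist t₀ ∈ (0,1) and a measurable set 𝒳₀ ⊆ 𝒳 with R_{t₀}(𝒳₀) > 0 such that for every z ∈ 𝒳₀, R_{01} ≪ R((X_0, X_1) ∈ · | X_{t₀} = z). Then there exist nonnegative measurable functions f₀, g₁ on 𝒳 such that dP/dR = f₀(X_0) g₁(X_1), R-a.s. -/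
open MeasureTheory

noncomputable section

variable {Ω 𝒳 : Type*}

/-!
Disintegrate `R` along `X t₀` with the kernel `κ`. The Markov property of `R` at `t₀` makes
`X 0` and `X 1` independent under `κ z`, and the Markov property of `P` makes them independent under
`(κ z).withDensity h`, the unnormalised conditional law of `(X 0, X 1)` under `P`, for
`R_{t₀}`-almost every `z`. For one such `z ∈ 𝒳₀` both measures are therefore products of their
marginals, `κ z = α ⊗ β` and `c • (κ z).withDensity h = ρ₀ ⊗ ρ₁` with `c = ∫ h d(κ z)`, so
`c h(x, y) = dρ₀/dα (x) · dρ₁/dβ (y)` for `κ z`-almost every `(x, y)`, hence `R_{01}`-almost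
everywhere because `R_{01} ≪ κ z`; the same domination forces `c ≠ 0`.

As `𝒳` is an arbitrary measurable space, "almost every `z`" can only be arranged for countably
many rectangles at once. This is enough because `h` is measurable for the product of two countably
generated sub-σ-algebras, and the product decompositions are carried out on those.
-/

open ProbabilityTheory MeasurableSpace Set
open scoped ENNReal

section CountablyGenerated

variable {α β γ : Type*}

theorem MeasurableSpace.prod_mono {m₁ m₁' : MeasurableSpace α} {m₂ m₂' : MeasurableSpace β}
    (h₁ : m₁ ≤ m₁') (h₂ : m₂ ≤ m₂') : m₁.prod m₂ ≤ m₁'.prod m₂' :=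
  sup_le_sup (comap_mono h₁) (comap_mono h₂)

theorem exists_countable_isPiSystem_generateFrom_eq {S : Set (Set α)} (hS : S.Countable) :
    ∃ C : Set (Set α), C.Countable ∧ IsPiSystem C ∧ univ ∈ C ∧
      generateFrom C = generateFrom S := by
  refine ⟨(⋂₀ ·) '' {t | t.Finite ∧ t ⊆ S}, (countable_ofPred_finite_subset hS).image _, ?_,
    ⟨∅, ⟨finite_empty, empty_subset _⟩, sInter_empty⟩, le_antisymm ?_ ?_⟩
  · rintro _ ⟨t, ⟨ht, htS⟩, rfl⟩ _ ⟨t', ⟨ht', ht'S⟩, rfl⟩ -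
    exact ⟨t ∪ t', ⟨ht.union ht', union_subset htS ht'S⟩, sInter_union t t'⟩
  · refine generateFrom_le ?_
    rintro _ ⟨t, ⟨ht, htS⟩, rfl⟩
    exact .sInter ht.countable fun s hs => measurableSet_generateFrom (htS hs)
  · exact generateFrom_le fun s hs => measurableSet_generateFrom
      ⟨{s}, ⟨finite_singleton s, singleton_subset_iff.2 hs⟩, sInter_singleton s⟩

variable [mα : MeasurableSpace α] [mβ : MeasurableSpace β]

theorem MeasurableSet.exists_countable_measurableSet_prod_generateFrom {T : Set (α × β)}
    (hT : MeasurableSet T) :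
    ∃ (S : Set (Set α)) (S' : Set (Set β)), S.Countable ∧ S'.Countable ∧
      generateFrom S ≤ mα ∧ generateFrom S' ≤ mβ ∧
      MeasurableSet[(generateFrom S).prod (generateFrom S')] T := by
  rw [← generateFrom_prod] at hT
  induction T, hT using generateFrom_induction with
  | hC T hT =>
    obtain ⟨s, hs, t, ht, rfl⟩ := hT
    refine ⟨{s}, {t}, countable_singleton s, countable_singleton t, ?_, ?_,
      (measurableSet_generateFrom (mem_singleton s)).prod
        (measurableSet_generateFrom (mem_singleton t))⟩
    · exact generateFrom_le fun _ h => h ▸ hs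
    · exact generateFrom_le fun _ h => h ▸ ht
  | empty =>
    exact ⟨∅, ∅, countable_empty, countable_empty, generateFrom_le (by simp),
      generateFrom_le (by simp), @MeasurableSet.empty _ ((generateFrom ∅).prod (generateFrom ∅))⟩
  | compl T _ ih =>
    obtain ⟨S, S', hS, hS', hSle, hS'le, hT⟩ := ih
    exact ⟨S, S', hS, hS', hSle, hS'le, hT.compl⟩
  | iUnion T _ ih =>
    choose S S' hS hS' hSle hS'le hT using ih
    refine ⟨⋃ n, S n, ⋃ n, S' n, countable_iUnion hS, countable_iUnion hS', ?_, ?_,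
      .iUnion fun n => prod_mono (generateFrom_mono (subset_iUnion S n))
        (generateFrom_mono (subset_iUnion S' n)) _ (hT n)⟩
    · rw [← iSup_generateFrom]; exact iSup_le hSle
    · rw [← iSup_generateFrom]; exact iSup_le hS'le

theorem Measurable.exists_countable_measurable_prod_generateFrom [MeasurableSpace γ]
    [CountablyGenerated γ] {f : α × β → γ} (hf : Measurable f) :
    ∃ (S : Set (Set α)) (S' : Set (Set β)), S.Countable ∧ S'.Countable ∧
      generateFrom S ≤ mα ∧ generateFrom S' ≤ mβ ∧
      Measurable[(generateFrom S).prod (generateFrom S')] f := by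
  obtain ⟨b, hb, hbf⟩ :=
    (CountablyGenerated.comap (m := ‹MeasurableSpace γ›) f).isCountablyGenerated
  have hT : ∀ T ∈ b, ∃ (S : Set (Set α)) (S' : Set (Set β)), S.Countable ∧ S'.Countable ∧
      generateFrom S ≤ mα ∧ generateFrom S' ≤ mβ ∧
      MeasurableSet[(generateFrom S).prod (generateFrom S')] T := fun T hT =>
    MeasurableSet.exists_countable_measurableSet_prod_generateFrom
      (hf.comap_le _ (hbf ▸ measurableSet_generateFrom hT))
  choose! S S' hS hS' hSle hS'le hT using hT
  refine ⟨⋃ T ∈ b, S T, ⋃ T ∈ b, S' T, hb.biUnion hS, hb.biUnion hS', ?_, ?_, ?_⟩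
  · refine generateFrom_le fun s hs => ?_
    obtain ⟨T, hTb, hs⟩ := mem_iUnion₂.1 hs
    exact hSle T hTb _ (measurableSet_generateFrom hs)
  · refine generateFrom_le fun s hs => ?_
    obtain ⟨T, hTb, hs⟩ := mem_iUnion₂.1 hs
    exact hS'le T hTb _ (measurableSet_generateFrom hs)
  · rw [measurable_iff_comap_le, hbf]
    exact generateFrom_le fun T hTb => prod_mono (generateFrom_mono (subset_biUnion_of_mem hTb))
      (generateFrom_mono (subset_biUnion_of_mem hTb)) _ (hT T hTb)

end CountablyGenerated

section ProductOfMarginals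

variable {α β : Type*} [mα : MeasurableSpace α] [mβ : MeasurableSpace β]

/-- For a probability measure this is the independence of the coordinate events `s × univ` and
`univ × t`; the division-free form is invariant under scaling `ξ`, so it applies verbatim to
unnormalised measures such as `μ.withDensity h`, and holds trivially for `ξ = 0`. -/
def MeasureTheory.Measure.RectFactorizes (ξ : Measure (α × β)) (s : Set α) (t : Set β) : Prop :=
  ξ univ * ξ (s ×ˢ t) = ξ (s ×ˢ univ) * ξ (univ ×ˢ t)

theorem MeasureTheory.Measure.smul_eq_fst_prod_snd {ξ : Measure (α × β)} [IsFiniteMeasure ξ]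
    {C : Set (Set α)} {D : Set (Set β)} (hC : generateFrom C = mα) (hD : generateFrom D = mβ)
    (hCpi : IsPiSystem C) (hDpi : IsPiSystem D) (hCuniv : univ ∈ C) (hDuniv : univ ∈ D)
    (hξ : ∀ s ∈ C, ∀ t ∈ D, ξ.RectFactorizes s t) :
    ξ univ • ξ = ξ.fst.prod ξ.snd := by
  refine (prod_eq_generateFrom hC hD hCpi hDpi
    ⟨fun _ => univ, fun _ => hCuniv, fun _ => measure_lt_top _ _, iUnion_const _⟩
    ⟨fun _ => univ, fun _ => hDuniv, fun _ => measure_lt_top _ _, iUnion_const _⟩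
    fun s hs t ht => ?_).symm
  have hsm : MeasurableSet s := hC ▸ measurableSet_generateFrom hs
  have htm : MeasurableSet t := hD ▸ measurableSet_generateFrom ht
  rw [smul_apply, smul_eq_mul, hξ s hs t ht, fst_apply hsm, snd_apply htm, prod_univ, univ_prod]

theorem exists_ae_eq_mul_of_rectFactorizes {μ : Measure (α × β)} [IsProbabilityMeasure μ]
    {C : Set (Set α)} {D : Set (Set β)} (hC : generateFrom C = mα) (hD : generateFrom D = mβ)
    (hCpi : IsPiSystem C) (hDpi : IsPiSystem D) (hCuniv : univ ∈ C) (hDuniv : univ ∈ D)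
    {h : α × β → ℝ≥0∞} (hh : Measurable h) (hc0 : ∫⁻ q, h q ∂μ ≠ 0) (hc : ∫⁻ q, h q ∂μ ≠ ∞)
    (hμ : ∀ s ∈ C, ∀ t ∈ D, μ.RectFactorizes s t)
    (hρ : ∀ s ∈ C, ∀ t ∈ D, (μ.withDensity h).RectFactorizes s t) :
    ∃ f g, Measurable f ∧ Measurable g ∧ h =ᵐ[μ] fun q => f q.1 * g q.2 := by
  have hμprod := μ.smul_eq_fst_prod_snd hC hD hCpi hDpi hCuniv hDuniv hμ
  rw [measure_univ, one_smul] at hμprod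
  set ρ := μ.withDensity h
  have hρuniv : ρ univ = ∫⁻ q, h q ∂μ := by rw [withDensity_apply _ .univ, Measure.restrict_univ]
  have : IsFiniteMeasure ρ := ⟨hρuniv ▸ hc.lt_top⟩
  have hρprod := ρ.smul_eq_fst_prod_snd hC hD hCpi hDpi hCuniv hDuniv hρ
  set f := ρ.fst.rnDeriv μ.fst
  set g := ρ.snd.rnDeriv μ.snd
  have hρμ : ρ ≪ μ := withDensity_absolutelyContinuous μ h
  have hprod : ρ.fst.prod ρ.snd = μ.withDensity fun q => f q.1 * g q.2 := by
    conv_rhs => rw [hμprod]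
    rw [← prod_withDensity (Measure.measurable_rnDeriv _ _) (Measure.measurable_rnDeriv _ _),
      Measure.withDensity_rnDeriv_eq _ _ (show ρ.fst ≪ μ.fst from hρμ.map measurable_fst),
      Measure.withDensity_rnDeriv_eq _ _ (show ρ.snd ≪ μ.snd from hρμ.map measurable_snd)]
  have hae : (fun q => ρ univ * h q) =ᵐ[μ] fun q => f q.1 * g q.2 := by
    refine (withDensity_eq_iff_of_sigmaFinite (by fun_prop) (by fun_prop)).1 ?_
    rw [← hprod, ← hρprod, ← withDensity_smul _ hh]
    rfl
  refine ⟨fun x => (ρ univ)⁻¹ * f x, g, by fun_prop, by fun_prop, ?_⟩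
  filter_upwards [hae] with q hq
  rw [mul_assoc, ← hq, ← mul_assoc, hρuniv, ENNReal.inv_mul_cancel hc0 hc, one_mul]

theorem exists_ae_eq_mul_of_rectFactorizes_of_le {μ : Measure (α × β)} [IsProbabilityMeasure μ]
    {C : Set (Set α)} {D : Set (Set β)} (hC : generateFrom C ≤ mα) (hD : generateFrom D ≤ mβ)
    (hCpi : IsPiSystem C) (hDpi : IsPiSystem D) (hCuniv : univ ∈ C) (hDuniv : univ ∈ D)
    {h : α × β → ℝ≥0∞} (hh : Measurable[(generateFrom C).prod (generateFrom D)] h)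
    (hc0 : ∫⁻ q, h q ∂μ ≠ 0) (hc : ∫⁻ q, h q ∂μ ≠ ∞)
    (hμ : ∀ s ∈ C, ∀ t ∈ D, μ.RectFactorizes s t)
    (hρ : ∀ s ∈ C, ∀ t ∈ D, (μ.withDensity h).RectFactorizes s t) :
    ∃ f g, Measurable f ∧ Measurable g ∧ h =ᵐ[μ] fun q => f q.1 * g q.2 := by
  have hm := MeasurableSpace.prod_mono hC hD
  have hrect : ∀ {s : Set α} {t : Set β}, MeasurableSet[generateFrom C] s →
      MeasurableSet[generateFrom D] t → ∀ ξ : Measure (α × β), ξ.trim hm (s ×ˢ t) = ξ (s ×ˢ t) :=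
    fun hs ht ξ => trim_measurableSet_eq hm (hs.prod ht)
  have htrim : ∀ ξ : Measure (α × β), ∀ s ∈ C, ∀ t ∈ D, ξ.RectFactorizes s t →
      @Measure.RectFactorizes α β (generateFrom C) (generateFrom D) (ξ.trim hm) s t := by
    intro ξ s hs t ht hξ
    have hsm := measurableSet_generateFrom hs
    have htm := measurableSet_generateFrom ht
    unfold Measure.RectFactorizes
    rw [← univ_prod_univ, hrect hsm htm, hrect hsm .univ, hrect .univ htm, hrect .univ .univ,
      univ_prod_univ]
    exact hξ
  have : IsProbabilityMeasure (μ.trim hm) := ⟨by rw [trim_measurableSet_eq hm .univ, measure_univ]⟩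
  obtain ⟨f, g, hf, hg, hfg⟩ := @exists_ae_eq_mul_of_rectFactorizes α β (generateFrom C)
    (generateFrom D) (μ.trim hm) _ C D rfl rfl hCpi hDpi hCuniv hDuniv h hh
    (by rwa [lintegral_trim hm hh]) (by rwa [lintegral_trim hm hh])
    (fun s hs t ht => htrim μ s hs t ht (hμ s hs t ht))
    (fun s hs t ht => by
      rw [← trim_withDensity hm hh]
      exact htrim _ s hs t ht (hρ s hs t ht))
  exact ⟨f, g, hf.mono hC le_rfl, hg.mono hD le_rfl, ae_of_ae_trim hm hfg⟩

theorem MeasureTheory.Measure.rectFactorizes_of_div_eq {ξ : Measure (α × β)} {s : Set α}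
    {t : Set β} (h0 : ξ univ ≠ 0) (htop : ξ univ ≠ ∞)
    (h : ξ (s ×ˢ t) / ξ univ = ξ (s ×ˢ univ) / ξ univ * (ξ (univ ×ˢ t) / ξ univ)) :
    ξ.RectFactorizes s t :=
  calc ξ univ * ξ (s ×ˢ t) = ξ univ * (ξ (s ×ˢ t) / ξ univ * ξ univ) := by
        rw [ENNReal.div_mul_cancel h0 htop]
    _ = ξ (s ×ˢ univ) / ξ univ * ξ univ * (ξ (univ ×ˢ t) / ξ univ * ξ univ) := by rw [h]; ring
    _ = ξ (s ×ˢ univ) * ξ (univ ×ˢ t) := by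
        rw [ENNReal.div_mul_cancel h0 htop, ENNReal.div_mul_cancel h0 htop]

end ProductOfMarginals

section Disintegration

variable {𝒴 : Type*} [MeasurableSpace Ω] [MeasurableSpace 𝒳] [MeasurableSpace 𝒴]

theorem condExp_ind_comap_ae_eq {Q : Measure Ω} [IsFiniteMeasure Q] {Y : Ω → 𝒳}
    (hY : Measurable Y) {A : Set Ω} (hA : MeasurableSet A) {ψ : 𝒳 → ℝ≥0∞} (hψ : Measurable ψ)
    (hψ1 : ∀ z, ψ z ≤ 1)
    (hAψ : ∀ S, MeasurableSet S → Q (A ∩ Y ⁻¹' S) = ∫⁻ z in S, ψ z ∂(Q.map Y)) :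
    Q[ind A | MeasurableSpace.comap Y inferInstance] =ᵐ[Q] fun ω => (ψ (Y ω)).toReal := by
  have hm : MeasurableSpace.comap Y inferInstance ≤ ‹MeasurableSpace Ω› := hY.comap_le
  have hψY : Measurable[MeasurableSpace.comap Y inferInstance] fun ω => (ψ (Y ω)).toReal :=
    (ENNReal.measurable_toReal.comp hψ).comp (comap_measurable Y)
  have hψY_lt_top : ∀ ω, ψ (Y ω) < ∞ := fun ω => (hψ1 _).trans_lt ENNReal.one_lt_top
  refine (ae_eq_condExp_of_forall_setIntegral_eq hm ((integrable_const 1).indicator hA)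
    (fun s _ _ => ?_) (fun s hs _ => ?_) hψY.aestronglyMeasurable).symm
  · refine (Integrable.mono' (integrable_const 1) (hψY.mono hm le_rfl).aestronglyMeasurable
      (.of_forall fun ω => ?_)).integrableOn
    rw [Real.norm_eq_abs, abs_of_nonneg ENNReal.toReal_nonneg]
    exact ENNReal.toReal_le_of_le_ofReal zero_le_one (by simpa using hψ1 (Y ω))
  · obtain ⟨S, hS, rfl⟩ := hs
    rw [integral_toReal (f := fun ω => ψ (Y ω)) (hψ.comp hY).aemeasurable.restrict
        (.of_forall hψY_lt_top),
      ← setLIntegral_map hS hψ hY, ← hAψ S hS, ind, setIntegral_indicator hA, setIntegral_const,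
      smul_eq_mul, mul_one, inter_comm, measureReal_def]

theorem MeasureTheory.Measure.measure_div_measure_univ_le_one (ξ : Measure 𝒴) (T : Set 𝒴) :
    ξ T / ξ univ ≤ 1 :=
  ENNReal.div_le_of_le_mul (by rw [one_mul]; exact measure_mono (subset_univ T))

/-- Unlike a regular conditional distribution, `η` need not be normalised and `ν₀` need not be
the law of `Y`. -/
def IsDisintegration (Q : Measure Ω) (Y : Ω → 𝒳) (Z : Ω → 𝒴) (ν₀ : Measure 𝒳)
    (η : Kernel 𝒳 𝒴) : Prop :=
  ∀ S, MeasurableSet S → ∀ T, MeasurableSet T →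
    Q {ω | Y ω ∈ S ∧ Z ω ∈ T} = ∫⁻ z in S, η z T ∂ν₀

namespace IsDisintegration

variable {Q : Measure Ω} {Y : Ω → 𝒳} {Z : Ω → 𝒴} {ν₀ : Measure 𝒳} {η : Kernel 𝒳 𝒴}

theorem map_eq_withDensity (hQ : IsDisintegration Q Y Z ν₀ η) (hY : Measurable Y) :
    Q.map Y = ν₀.withDensity fun z => η z univ := by
  ext S hS
  rw [Measure.map_apply hY hS, withDensity_apply _ hS, ← hQ S hS univ .univ]
  simp only [mem_univ, and_true]
  rfl

theorem ae_ne_top [IsFiniteMeasure Q] (hQ : IsDisintegration Q Y Z ν₀ η) :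
    ∀ᵐ z ∂ν₀, η z univ ≠ ∞ := by
  refine (ae_lt_top (η.measurable_coe .univ) ?_).mono fun _ => ne_of_lt
  rw [← setLIntegral_univ, ← hQ univ .univ univ .univ]
  exact measure_ne_top _ _

theorem map_prodMk_eq_compProd [IsFiniteMeasure Q] [SFinite ν₀] [IsSFiniteKernel η]
    (hQ : IsDisintegration Q Y Z ν₀ η) (hY : Measurable Y) (hZ : Measurable Z) :
    Q.map (fun ω => (Y ω, Z ω)) = ν₀ ⊗ₘ η := by
  have hrect : ∀ S, MeasurableSet S → ∀ T, MeasurableSet T →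
      Q.map (fun ω => (Y ω, Z ω)) (S ×ˢ T) = (ν₀ ⊗ₘ η) (S ×ˢ T) := fun S hS T hT => by
    rw [Measure.map_apply (hY.prodMk hZ) (hS.prod hT), Measure.compProd_apply_prod hS hT]
    exact hQ S hS T hT
  refine ext_of_generate_finite _ generateFrom_prod.symm isPiSystem_prod ?_ ?_
  · rintro _ ⟨S, hS, T, hT, rfl⟩
    exact hrect S hS T hT
  · simpa only [univ_prod_univ] using hrect univ .univ univ .univ

theorem withDensity_comp [IsFiniteMeasure Q] [SFinite ν₀] [IsSFiniteKernel η]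
    (hQ : IsDisintegration Q Y Z ν₀ η) (hY : Measurable Y) (hZ : Measurable Z)
    {g : 𝒴 → ℝ≥0∞} (hg : Measurable g) :
    IsDisintegration (Q.withDensity fun ω => g (Z ω)) Y Z ν₀ (η.withDensity fun _ y => g y) := by
  intro S hS T hT
  have hg' : Measurable fun q : 𝒳 × 𝒴 => g q.2 := hg.comp measurable_snd
  calc (Q.withDensity fun ω => g (Z ω)) {ω | Y ω ∈ S ∧ Z ω ∈ T}
      = ∫⁻ ω in (fun ω => (Y ω, Z ω)) ⁻¹' (S ×ˢ T), g (Z ω) ∂Q :=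
        withDensity_apply _ ((hY.prodMk hZ) (hS.prod hT))
    _ = ∫⁻ q in S ×ˢ T, g q.2 ∂(Q.map fun ω => (Y ω, Z ω)) :=
        (setLIntegral_map (hS.prod hT) hg' (hY.prodMk hZ)).symm
    _ = ∫⁻ z in S, (η.withDensity fun _ y => g y) z T ∂ν₀ := by
        rw [hQ.map_prodMk_eq_compProd hY hZ, Measure.setLIntegral_compProd hg' hS hT]
        simp_rw [Kernel.withDensity_apply' (f := fun _ y => g y) _ hg']

theorem condExp_ind_preimage_ae_eq [IsFiniteMeasure Q] (hQ : IsDisintegration Q Y Z ν₀ η)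
    (hY : Measurable Y) (hZ : Measurable Z) {T : Set 𝒴} (hT : MeasurableSet T) :
    Q[ind (Z ⁻¹' T) | MeasurableSpace.comap Y inferInstance]
      =ᵐ[Q] fun ω => (η (Y ω) T / η (Y ω) univ).toReal := by
  have hψ : Measurable fun z => η z T / η z univ :=
    (η.measurable_coe hT).div (η.measurable_coe .univ)
  refine condExp_ind_comap_ae_eq hY (hZ hT) hψ (fun z => (η z).measure_div_measure_univ_le_one T)
    fun S hS => ?_
  rw [hQ.map_eq_withDensity hY,
    setLIntegral_withDensity_eq_setLIntegral_mul _ (η.measurable_coe .univ) hψ hS, inter_comm]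
  refine (hQ S hS T hT).trans (setLIntegral_congr_fun_ae hS (hQ.ae_ne_top.mono fun z hz _ => ?_))
  rcases eq_or_ne (η z univ) 0 with h0 | h0
  · simp [Measure.measure_univ_eq_zero.1 h0]
  · exact (ENNReal.mul_div_cancel h0 hz).symm

end IsDisintegration

end Disintegration

section Markov

theorem measurableSet_window_preimage [MeasurableSpace 𝒳] {X : ℝ → Ω → 𝒳} {s u r : ℝ}
    (hr : r ∈ Icc s u) {A : Set 𝒳} (hA : MeasurableSet A) :
    MeasurableSet[window X s u] (X r ⁻¹' A) :=
  le_iSup₂ (f := fun r (_ : r ∈ Icc s u) => MeasurableSpace.comap (X r) inferInstance) r hr _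
    ⟨A, hA, rfl⟩

variable [MeasurableSpace Ω] [MeasurableSpace 𝒳]

theorem IsMarkov.ae_rectFactorizes {X : ℝ → Ω → 𝒳} (hX : ∀ t, Measurable (X t))
    {Q : Measure Ω} [IsFiniteMeasure Q] (hQ : IsMarkov X Q) {t : ℝ} (ht : t ∈ Icc 0 1)
    {ν₀ : Measure 𝒳} {η : Kernel 𝒳 (𝒳 × 𝒳)}
    (hdis : IsDisintegration Q (X t) (fun ω => (X 0 ω, X 1 ω)) ν₀ η) {A B : Set 𝒳}
    (hA : MeasurableSet A) (hB : MeasurableSet B) :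
    ∀ᵐ z ∂ν₀, (η z).RectFactorizes A B := by
  have hZ : Measurable fun ω => (X 0 ω, X 1 ω) := (hX 0).prodMk (hX 1)
  set ψ : Set (𝒳 × 𝒳) → 𝒳 → ℝ≥0∞ := fun T z => η z T / η z univ
  have hψ : ∀ T, MeasurableSet T → Measurable (ψ T) := fun T hT =>
    (η.measurable_coe hT).div (η.measurable_coe .univ)
  have hψ_ne_top : ∀ T z, ψ T z ≠ ∞ := fun T z =>
    ((η z).measure_div_measure_univ_le_one T).trans_lt ENNReal.one_lt_top |>.ne
  have hAB := hdis.condExp_ind_preimage_ae_eq (hX t) hZ (hA.prod hB)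
  have hA' := hdis.condExp_ind_preimage_ae_eq (hX t) hZ (hA.prod .univ)
  have hB' := hdis.condExp_ind_preimage_ae_eq (hX t) hZ (MeasurableSet.univ.prod hB)
  simp only [mk_preimage_prod, preimage_univ, inter_univ, univ_inter] at hAB hA' hB'
  have hQae : ∀ᵐ ω ∂Q, ψ (A ×ˢ B) (X t ω) = ψ (A ×ˢ univ) (X t ω) * ψ (univ ×ˢ B) (X t ω) := by
    filter_upwards [hQ t ht _ _ (measurableSet_window_preimage ⟨le_rfl, ht.1⟩ hA)
      (measurableSet_window_preimage ⟨ht.2, le_rfl⟩ hB), hAB, hA', hB'] with ω hω hωAB hωA hωB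
    rw [← ENNReal.toReal_eq_toReal_iff' (hψ_ne_top _ _)
      (ENNReal.mul_ne_top (hψ_ne_top _ _) (hψ_ne_top _ _)), ENNReal.toReal_mul, ← hωAB, ← hωA,
      ← hωB]
    exact hω
  have hν₀ : ∀ᵐ z ∂ν₀, η z univ ≠ 0 → ψ (A ×ˢ B) z = ψ (A ×ˢ univ) z * ψ (univ ×ˢ B) z := by
    rw [← ae_withDensity_iff (η.measurable_coe .univ), ← hdis.map_eq_withDensity (hX t)]
    exact (ae_map_iff (hX t).aemeasurable (measurableSet_eq_fun (hψ _ (hA.prod hB))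
      ((hψ _ (hA.prod .univ)).mul (hψ _ (MeasurableSet.univ.prod hB))))).2 hQae
  filter_upwards [hν₀, hdis.ae_ne_top] with z hz hfin
  rcases eq_or_ne (η z univ) 0 with h0 | h0
  · simp [Measure.RectFactorizes, Measure.measure_univ_eq_zero.1 h0]
  · exact Measure.rectFactorizes_of_div_eq h0 hfin (hz h0)

theorem IsMarkov.ae_forall_rectFactorizes {X : ℝ → Ω → 𝒳} (hX : ∀ t, Measurable (X t))
    {Q : Measure Ω} [IsFiniteMeasure Q] (hQ : IsMarkov X Q) {t : ℝ} (ht : t ∈ Icc 0 1)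
    {ν₀ : Measure 𝒳} {η : Kernel 𝒳 (𝒳 × 𝒳)}
    (hdis : IsDisintegration Q (X t) (fun ω => (X 0 ω, X 1 ω)) ν₀ η) {C D : Set (Set 𝒳)}
    (hC : C.Countable) (hD : D.Countable) (hCm : ∀ s ∈ C, MeasurableSet s)
    (hDm : ∀ s ∈ D, MeasurableSet s) :
    ∀ᵐ z ∂ν₀, ∀ s ∈ C, ∀ s' ∈ D, (η z).RectFactorizes s s' := by
  rw [ae_ball_iff hC]
  exact fun s hs => (ae_ball_iff hD).2 fun s' hs' =>
    hQ.ae_rectFactorizes hX ht hdis (hCm s hs) (hDm s' hs')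

end Markov

theorem markov_in_reciprocal_class_factorizes_general
    [MeasurableSpace Ω] [MeasurableSpace 𝒳]
    (X : ℝ → Ω → 𝒳) (hX : ∀ t, Measurable (X t))
    (R : Measure Ω) [IsProbabilityMeasure R] (hR : IsMarkov X R)
    (h : 𝒳 × 𝒳 → ENNReal) (hh : Measurable h)
    (hnorm : ∫⁻ p, h p ∂(R.map (fun ω => (X 0 ω, X 1 ω))) = 1)
    (P : Measure Ω) (hP : P = R.withDensity (fun ω => h (X 0 ω, X 1 ω)))
    (hPMarkov : IsMarkov X P)
    -- the regular conditional law of `(X_0, X_1)` given `X_{t₀} = z`: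
    (t₀ : ℝ) (ht₀ : t₀ ∈ Set.Ioo (0:ℝ) 1)
    (κ : 𝒳 → Measure (𝒳 × 𝒳)) (hκmeas : Measurable κ)
    (hκprob : ∀ z, IsProbabilityMeasure (κ z))
    (hκ : ∀ S : Set 𝒳, MeasurableSet S → ∀ T : Set (𝒳 × 𝒳), MeasurableSet T →
      R {ω | X t₀ ω ∈ S ∧ (X 0 ω, X 1 ω) ∈ T} = ∫⁻ z in S, κ z T ∂(R.map (X t₀)))
    (𝒳o : Set 𝒳) (hpos : 0 < (R.map (X t₀)) 𝒳o)
    (habs : ∀ z ∈ 𝒳o, R.map (fun ω => (X 0 ω, X 1 ω)) ≪ κ z) :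
    ∃ f₀ g₁ : 𝒳 → ENNReal, Measurable f₀ ∧ Measurable g₁ ∧
      ∀ᵐ ω ∂ R, h (X 0 ω, X 1 ω) = f₀ (X 0 ω) * g₁ (X 1 ω) := by
  have hpair : Measurable fun ω => (X 0 ω, X 1 ω) := (hX 0).prodMk (hX 1)
  have hIcc : t₀ ∈ Set.Icc (0 : ℝ) 1 := Set.Ioo_subset_Icc_self ht₀
  let κ' : Kernel 𝒳 (𝒳 × 𝒳) := ⟨κ, hκmeas⟩
  have : IsMarkovKernel κ' := ⟨hκprob⟩
  have hdisR : IsDisintegration R (X t₀) (fun ω => (X 0 ω, X 1 ω)) (R.map (X t₀)) κ' := hκ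
  have hdisP := hP ▸ hdisR.withDensity_comp (hX t₀) hpair hh
  have : IsProbabilityMeasure P := ⟨by
    rw [hP, withDensity_apply _ .univ, Measure.restrict_univ, ← lintegral_map hh hpair, hnorm]⟩
  obtain ⟨S, S', hS, hS', hSle, hS'le, hhS⟩ := hh.exists_countable_measurable_prod_generateFrom
  obtain ⟨C, hC, hCpi, hCuniv, hCS⟩ := exists_countable_isPiSystem_generateFrom_eq hS
  obtain ⟨D, hD, hDpi, hDuniv, hDS'⟩ := exists_countable_isPiSystem_generateFrom_eq hS'
  rw [← hCS] at hSle hhS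
  rw [← hDS'] at hS'le hhS
  have hCm : ∀ s ∈ C, MeasurableSet s := fun s hs => hSle s (measurableSet_generateFrom hs)
  have hDm : ∀ s ∈ D, MeasurableSet s := fun s hs => hS'le s (measurableSet_generateFrom hs)
  obtain ⟨z, hz, hRz, hPz, hztop⟩ := Measure.exists_mem_of_measure_ne_zero_of_ae hpos.ne'
    (ae_restrict_of_ae ((hR.ae_forall_rectFactorizes hX hIcc hdisR hC hD hCm hDm).and
      ((hPMarkov.ae_forall_rectFactorizes hX hIcc hdisP hC hD hCm hDm).and hdisP.ae_ne_top)))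
  simp only [Kernel.withDensity_apply (f := fun _ p => h p) _ (hh.comp measurable_snd)] at hPz hztop
  rw [withDensity_apply _ .univ, Measure.restrict_univ] at hztop
  have hz0 : ∫⁻ p, h p ∂κ z ≠ 0 := fun h0 => by
    rw [lintegral_congr_ae ((habs z hz).ae_le ((lintegral_eq_zero_iff hh).1 h0))] at hnorm
    simp at hnorm
  have := hκprob z
  obtain ⟨f, g, hf, hg, hfg⟩ := exists_ae_eq_mul_of_rectFactorizes_of_le hSle hS'le hCpi hDpi
    hCuniv hDuniv hhS hz0 hztop hRz hPz
  exact ⟨f, g, hf, hg, ae_of_ae_map hpair.aemeasurable ((habs z hz).ae_le hfg)⟩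

/-- if `R` is Markov, `P = h(X_0,X_1)·R` is Markov, and the endpoint marginal
`R_{01}` is dominated by the conditional law of `(X_0,X_1)` given `X_{t₀} = z` for all `z` in a
set of positive `R_{t₀}`-measure, then `h` factorizes: `dP/dR = f₀(X_0) g₁(X_1)` `R`-a.s. -/
theorem markov_in_reciprocal_class_factorizes
    [MeasurableSpace Ω] [MeasurableSpace 𝒳]
    (X : ℝ → Ω → 𝒳) (hX : ∀ t, Measurable (X t))
    (R : Measure Ω) [IsProbabilityMeasure R] (hR : IsMarkov X R)
    (h : 𝒳 × 𝒳 → ENNReal) (hh : Measurable h)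
    (hnorm : ∫⁻ p, h p ∂(R.map (fun ω => (X 0 ω, X 1 ω))) = 1)
    (P : Measure Ω) (hP : P = R.withDensity (fun ω => h (X 0 ω, X 1 ω)))
    (hPMarkov : IsMarkov X P)
    -- the regular conditional law of `(X_0, X_1)` given `X_{t₀} = z`:
    (t₀ : ℝ) (ht₀ : t₀ ∈ Set.Ioo (0:ℝ) 1)
    (κ : 𝒳 → Measure (𝒳 × 𝒳)) (hκmeas : Measurable κ)
    (hκprob : ∀ z, IsProbabilityMeasure (κ z))
    (hκ : ∀ S : Set 𝒳, MeasurableSet S → ∀ T : Set (𝒳 × 𝒳), MeasurableSet T →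
      R {ω | X t₀ ω ∈ S ∧ (X 0 ω, X 1 ω) ∈ T} = ∫⁻ z in S, κ z T ∂(R.map (X t₀)))
    (𝒳o : Set 𝒳) (h𝒳o : MeasurableSet 𝒳o) (hpos : 0 < (R.map (X t₀)) 𝒳o)
    (habs : ∀ z ∈ 𝒳o, R.map (fun ω => (X 0 ω, X 1 ω)) ≪ κ z) :
    ∃ f₀ g₁ : 𝒳 → ENNReal, Measurable f₀ ∧ Measurable g₁ ∧
      ∀ᵐ ω ∂ R, h (X 0 ω, X 1 ω) = f₀ (X 0 ω) * g₁ (X 1 ω) :=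
  markov_in_reciprocal_class_factorizes_general X hX R hR h hh hnorm P hP hPMarkov t₀ ht₀ κ hκmeas
    hκprob hκ 𝒳o hpos habs
end
end

section
/- Fix a reference probability measure R on path space and marginal constraints μ₀, μ₁ on 𝒳. The dynamical Schrödinger problem — minimize H(P|R) over probability measures P on Ω with P_0 = μ₀ and P_1 = μ₁ — has at most one solution; and if P̂ solves it, then π̂ = P̂_{01} solves the static problem of minimizing H(π|R_{01}) over π on 𝒳² with first marginal μ₀ and second marginal μ₁. Conversely, if π̂ solves the static problem with H(π̂|R_{01}) < ∞, then P̂ = ∫ R^{xy} π̂(dxdy) solves the dynamical problem. -/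
open MeasureTheory

noncomputable section

variable {Ω 𝒳 : Type*}

open Classical in
/-- Relative entropy (Kullback-Leibler divergence) `H(p|r) = ∫ log (dp/dr) dp ∈ [0,∞]`,
set to `∞` when `p` is not dominated by `r` or the integral is not defined. -/
def relEnt [MeasurableSpace Ω] (p r : Measure Ω) : ENNReal :=
  if p ≪ r ∧ Integrable (llr p r) p then ENNReal.ofReal (∫ ω, llr p r ω ∂p) else ⊤

/-- `P` solves the dynamical Schrödinger problem: it is a probability measure on path space
with prescribed initial and final marginals `μ₀`, `μ₁`, finite entropy with respect to `R`,
and it minimizes `H(·|R)` among all such measures. -/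
def IsDynSol [MeasurableSpace Ω] [MeasurableSpace 𝒳] (X : ℝ → Ω → 𝒳) (R : Measure Ω)
    (μ₀ μ₁ : Measure 𝒳) (P : Measure Ω) : Prop :=
  IsProbabilityMeasure P ∧ P.map (X 0) = μ₀ ∧ P.map (X 1) = μ₁ ∧ relEnt P R < ⊤ ∧
  ∀ Q : Measure Ω, IsProbabilityMeasure Q → Q.map (X 0) = μ₀ → Q.map (X 1) = μ₁ →
    relEnt P R ≤ relEnt Q R

/-- `π` solves the static Schrödinger problem: it is a probability measure on `𝒳 × 𝒳` with
prescribed marginals `μ₀`, `μ₁`, finite entropy with respect to `R₀₁`, and it minimizes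
`H(·|R₀₁)` among all such measures. -/
def IsStatSol [MeasurableSpace 𝒳] (R01 : Measure (𝒳 × 𝒳))
    (μ₀ μ₁ : Measure 𝒳) (π : Measure (𝒳 × 𝒳)) : Prop :=
  IsProbabilityMeasure π ∧ π.map Prod.fst = μ₀ ∧ π.map Prod.snd = μ₁ ∧ relEnt π R01 < ⊤ ∧
  ∀ ρ : Measure (𝒳 × 𝒳), IsProbabilityMeasure ρ → ρ.map Prod.fst = μ₀ → ρ.map Prod.snd = μ₁ →
    relEnt π R01 ≤ relEnt ρ R01

/-!
Relative entropy is strictly convex and both constraint sets are closed under midpoints, so each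
problem has at most one solution. The correspondence rests on two instances of the data processing
inequality: pushing forward by the endpoint map `(X 0, X 1)` gives `H(P₀₁|R₀₁) ≤ H(P|R)`, and
composing with the bridge kernel `B`, using `R = B ∘ₘ R₀₁`, gives `H(B ∘ₘ π|R) ≤ H(π|R₀₁)`.
Since `B ∘ₘ π` has endpoint law `π`, these two inequalities carry minimisers of either problem to
minimisers of the other.
-/

open InformationTheory ProbabilityTheory
open scoped ENNReal NNReal

lemma ENNReal.ofReal_add_div_two {x y : ℝ} (hx : 0 ≤ x) (hy : 0 ≤ y) :
    (ENNReal.ofReal x + ENNReal.ofReal y) / 2 = ENNReal.ofReal ((x + y) / 2) := by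
  rw [← ENNReal.ofReal_add hx hy, ENNReal.ofReal_div_of_pos two_pos, ENNReal.ofReal_ofNat]

namespace MeasureTheory.Measure

variable {α β : Type*} [MeasurableSpace α] [MeasurableSpace β] {p q r : Measure α}

instance isProbabilityMeasure_half_smul_add [IsProbabilityMeasure p] [IsProbabilityMeasure q] :
    IsProbabilityMeasure ((2⁻¹ : ℝ≥0) • (p + q)) := by
  constructor
  simp [ENNReal.inv_two_add_inv_two]

lemma map_half_smul_add {f : α → β} (hf : Measurable f) {μ : Measure β} (hp : p.map f = μ)
    (hq : q.map f = μ) : ((2⁻¹ : ℝ≥0) • (p + q)).map f = μ := by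
  rw [Measure.map_smul, Measure.map_add _ _ hf, hp, hq, ← two_smul ℝ≥0, smul_smul,
    inv_mul_cancel₀ two_ne_zero, one_smul]

lemma toReal_rnDeriv_half_smul_add [IsFiniteMeasure p] [IsFiniteMeasure q] [SigmaFinite r] :
    ∀ᵐ x ∂r, (((2⁻¹ : ℝ≥0) • (p + q)).rnDeriv r x).toReal =
      ((p.rnDeriv r x).toReal + (q.rnDeriv r x).toReal) / 2 := by
  filter_upwards [rnDeriv_smul_left (p + q) r 2⁻¹,
    rnDeriv_add p q r, rnDeriv_lt_top p r, rnDeriv_lt_top q r] with x hsmul hadd hp hq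
  rw [hsmul, Pi.smul_apply, hadd, Pi.add_apply, ENNReal.smul_def, smul_eq_mul,
    ENNReal.toReal_mul, ENNReal.toReal_add hp.ne hq.ne]
  simp [div_eq_inv_mul]

end MeasureTheory.Measure

namespace InformationTheory

lemma ofReal_klFun_midpoint_le {a b : ℝ} (ha : 0 ≤ a) (hb : 0 ≤ b) :
    ENNReal.ofReal (klFun ((a + b) / 2)) ≤
      (ENNReal.ofReal (klFun a) + ENNReal.ofReal (klFun b)) / 2 := by
  have h := convexOn_klFun.2 (Set.mem_Ici.2 ha) (Set.mem_Ici.2 hb) (by norm_num : (0:ℝ) ≤ 2⁻¹)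
    (by norm_num : (0:ℝ) ≤ 2⁻¹) (by norm_num)
  rw [ENNReal.ofReal_add_div_two (klFun_nonneg ha) (klFun_nonneg hb)]
  simp only [smul_eq_mul, inv_mul_eq_div, ← add_div] at h
  exact ENNReal.ofReal_le_ofReal h

lemma ofReal_klFun_midpoint_lt {a b : ℝ} (ha : 0 ≤ a) (hb : 0 ≤ b) (hab : a ≠ b) :
    ENNReal.ofReal (klFun ((a + b) / 2)) <
      (ENNReal.ofReal (klFun a) + ENNReal.ofReal (klFun b)) / 2 := by
  have h := strictConvexOn_klFun.2 (Set.mem_Ici.2 ha) (Set.mem_Ici.2 hb) hab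
    (by norm_num : (0:ℝ) < 2⁻¹) (by norm_num : (0:ℝ) < 2⁻¹) (by norm_num)
  rw [ENNReal.ofReal_add_div_two (klFun_nonneg ha) (klFun_nonneg hb)]
  simp only [smul_eq_mul, inv_mul_eq_div, ← add_div] at h
  exact (ENNReal.ofReal_lt_ofReal_iff_of_nonneg (klFun_nonneg (by positivity))).2 h

open MeasureTheory.Measure

variable {α : Type*} [MeasurableSpace α] {p q r : Measure α}

lemma klDiv_half_smul_add_lt [IsFiniteMeasure p] [IsFiniteMeasure q] [IsFiniteMeasure r]
    (hpq : p ≠ q) (hp : klDiv p r ≠ ∞) (hq : klDiv q r ≠ ∞) :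
    klDiv ((2⁻¹ : ℝ≥0) • (p + q)) r < (klDiv p r + klDiv q r) / 2 := by
  have hpr := (klDiv_ne_top_iff.1 hp).1
  have hqr := (klDiv_ne_top_iff.1 hq).1
  set F : α → ℝ≥0∞ := fun x => ENNReal.ofReal (klFun (p.rnDeriv r x).toReal)
  set G : α → ℝ≥0∞ := fun x => ENNReal.ofReal (klFun (q.rnDeriv r x).toReal)
  set M : α → ℝ≥0∞ :=
    fun x => ENNReal.ofReal (klFun (((2⁻¹ : ℝ≥0) • (p + q)).rnDeriv r x).toReal)
  rw [klDiv_eq_lintegral_klFun_of_ac hpr] at hp ⊢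
  rw [klDiv_eq_lintegral_klFun_of_ac hqr] at hq ⊢
  rw [klDiv_eq_lintegral_klFun_of_ac ((hpr.add_left hqr).smul_left _)]
  have hmean : (∫⁻ x, F x ∂r + ∫⁻ x, G x ∂r) / 2 = ∫⁻ x, (F x + G x) / 2 ∂r := by
    simp_rw [div_eq_mul_inv]
    rw [lintegral_mul_const' _ _ (by simp), lintegral_add_left (by fun_prop)]
  have hle : M ≤ᵐ[r] fun x => (F x + G x) / 2 := by
    filter_upwards [toReal_rnDeriv_half_smul_add (p := p) (q := q) (r := r)] with x hx
    simp only [M, hx]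
    exact ofReal_klFun_midpoint_le ENNReal.toReal_nonneg ENNReal.toReal_nonneg
  rw [hmean]
  -- Equality would make the convexity defect vanish `r`-a.e., which by strict convexity of
  -- `klFun` forces the two densities to agree.
  refine (lintegral_mono_ae hle).lt_of_ne fun heq => hpq ?_
  have hfin : ∫⁻ x, M x ∂r ≠ ∞ := by
    rw [heq, ← hmean]
    exact ENNReal.div_ne_top (ENNReal.add_ne_top.2 ⟨hp, hq⟩) two_ne_zero
  have hae := ae_eq_of_ae_le_of_lintegral_le hle hfin (by fun_prop) heq.ge
  have hfg : p.rnDeriv r =ᵐ[r] q.rnDeriv r := by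
    filter_upwards [hae, toReal_rnDeriv_half_smul_add (p := p) (q := q) (r := r),
      rnDeriv_lt_top p r, rnDeriv_lt_top q r] with x hx hmid hpx hqx
    by_contra hne
    have hlt := ofReal_klFun_midpoint_lt (ENNReal.toReal_nonneg (a := p.rnDeriv r x))
      (ENNReal.toReal_nonneg (a := q.rnDeriv r x))
      fun h => hne ((ENNReal.toReal_eq_toReal_iff' hpx.ne hqx.ne).1 h)
    simp only [M, hmid] at hx
    exact hlt.ne hx
  rw [← withDensity_rnDeriv_eq p r hpr, ← withDensity_rnDeriv_eq q r hqr,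
    withDensity_congr_ae hfg]

end InformationTheory

section RelEnt

variable {α β : Type*} [MeasurableSpace α] [MeasurableSpace β]

lemma relEnt_eq_klDiv (p r : Measure α) [IsProbabilityMeasure p] [IsProbabilityMeasure r] :
    relEnt p r = klDiv p r := by
  simp [relEnt, klDiv_def]

lemma relEnt_map_le (p r : Measure α) [IsProbabilityMeasure p] [IsProbabilityMeasure r]
    {f : α → β} (hf : Measurable f) : relEnt (p.map f) (r.map f) ≤ relEnt p r := by
  have := Measure.isProbabilityMeasure_map (μ := p) hf.aemeasurable
  have := Measure.isProbabilityMeasure_map (μ := r) hf.aemeasurable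
  simpa only [relEnt_eq_klDiv] using klDiv_map_le p r hf

lemma relEnt_comp_le (κ : Kernel α β) [IsMarkovKernel κ] (p r : Measure α)
    [IsProbabilityMeasure p] [IsProbabilityMeasure r] :
    relEnt (κ ∘ₘ p) (κ ∘ₘ r) ≤ relEnt p r := by
  simpa only [relEnt_eq_klDiv] using klDiv_comp_right_le p r κ

lemma eq_of_relEnt_le_relEnt_half_smul_add {p q r : Measure α} [IsProbabilityMeasure p]
    [IsProbabilityMeasure q] [IsProbabilityMeasure r] (hp : relEnt p r ≠ ∞) (hpq : relEnt p r = relEnt q r)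
    (hmid : relEnt p r ≤ relEnt ((2⁻¹ : ℝ≥0) • (p + q)) r) : p = q := by
  by_contra hne
  simp only [relEnt_eq_klDiv] at hp hpq hmid
  have hlt := klDiv_half_smul_add_lt hne hp (hpq ▸ hp)
  rw [← hpq, ENNReal.add_div, ENNReal.add_halves] at hlt
  exact (hmid.trans_lt hlt).false

end RelEnt

lemma MeasureTheory.Measure.map_eq_dirac_of_measure_preimage_singleton {α β : Type*}
    [MeasurableSpace α] [MeasurableSpace β] {μ : Measure α} [IsProbabilityMeasure μ]
    {f : α → β} (hf : Measurable f) {y : β} (hy : μ (f ⁻¹' {y}) = 1) :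
    μ.map f = Measure.dirac y := by
  ext s hs
  rw [Measure.map_apply hf hs, Measure.dirac_apply' y hs]
  by_cases hys : y ∈ s
  · rw [Set.indicator_of_mem hys, Pi.one_apply]
    exact le_antisymm prob_le_one (hy ▸ measure_mono (Set.preimage_mono (by simpa using hys)))
  · rw [Set.indicator_of_notMem hys, ← prob_compl_eq_one_iff (hf hs)]
    exact le_antisymm prob_le_one
      (hy ▸ measure_mono fun x hx => by simp_all [Set.mem_preimage])

lemma MeasureTheory.Measure.map_comp_eq_self_of_map_eq_dirac {α β : Type*} [MeasurableSpace α]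
    [MeasurableSpace β] (κ : Kernel β α) {f : α → β} (hf : Measurable f)
    (hκ : ∀ y, (κ y).map f = Measure.dirac y) (π : Measure β) : (κ ∘ₘ π).map f = π := by
  have hid : κ.map f = Kernel.id := by
    ext1 y
    rw [Kernel.map_apply _ hf, hκ, Kernel.id_apply]
  rw [Measure.map_comp π κ hf, hid, Measure.id_comp]

section Schroedinger

variable [MeasurableSpace Ω] [MeasurableSpace 𝒳] {X : ℝ → Ω → 𝒳} {R : Measure Ω}
  {μ₀ μ₁ : Measure 𝒳}

lemma IsDynSol.eq [IsProbabilityMeasure R] (hX0 : Measurable (X 0)) (hX1 : Measurable (X 1))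
    {P₁ P₂ : Measure Ω} (h₁ : IsDynSol X R μ₀ μ₁ P₁) (h₂ : IsDynSol X R μ₀ μ₁ P₂) : P₁ = P₂ := by
  obtain ⟨_, h₁0, h₁1, h₁fin, h₁min⟩ := h₁
  obtain ⟨_, h₂0, h₂1, -, h₂min⟩ := h₂
  exact eq_of_relEnt_le_relEnt_half_smul_add h₁fin.ne
    (le_antisymm (h₁min P₂ inferInstance h₂0 h₂1) (h₂min P₁ inferInstance h₁0 h₁1))
    (h₁min _ inferInstance (Measure.map_half_smul_add hX0 h₁0 h₂0)
      (Measure.map_half_smul_add hX1 h₁1 h₂1))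

lemma IsStatSol.eq {R₀₁ : Measure (𝒳 × 𝒳)} [IsProbabilityMeasure R₀₁] {π₁ π₂ : Measure (𝒳 × 𝒳)}
    (h₁ : IsStatSol R₀₁ μ₀ μ₁ π₁) (h₂ : IsStatSol R₀₁ μ₀ μ₁ π₂) : π₁ = π₂ := by
  obtain ⟨_, h₁0, h₁1, h₁fin, h₁min⟩ := h₁
  obtain ⟨_, h₂0, h₂1, -, h₂min⟩ := h₂
  exact eq_of_relEnt_le_relEnt_half_smul_add h₁fin.ne
    (le_antisymm (h₁min π₂ inferInstance h₂0 h₂1) (h₂min π₁ inferInstance h₁0 h₁1))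
    (h₁min _ inferInstance (Measure.map_half_smul_add measurable_fst h₁0 h₂0)
      (Measure.map_half_smul_add measurable_snd h₁1 h₂1))

lemma IsDynSol.isStatSol_map [IsProbabilityMeasure R] (hX0 : Measurable (X 0))
    (hX1 : Measurable (X 1)) (κ : Kernel (𝒳 × 𝒳) Ω) [IsMarkovKernel κ]
    (hR : R = κ ∘ₘ R.map fun ω => (X 0 ω, X 1 ω))
    (hκ : ∀ y, (κ y).map (fun ω => (X 0 ω, X 1 ω)) = Measure.dirac y)
    {P : Measure Ω} (hP : IsDynSol X R μ₀ μ₁ P) :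
    IsStatSol (R.map fun ω => (X 0 ω, X 1 ω)) μ₀ μ₁ (P.map fun ω => (X 0 ω, X 1 ω)) := by
  have hT : Measurable fun ω => (X 0 ω, X 1 ω) := hX0.prodMk hX1
  have := Measure.isProbabilityMeasure_map (μ := R) hT.aemeasurable
  obtain ⟨_, hP0, hP1, hPfin, hPmin⟩ := hP
  refine ⟨Measure.isProbabilityMeasure_map hT.aemeasurable,
    (Measure.fst_map_prodMk hX1).trans hP0, (Measure.snd_map_prodMk hX0).trans hP1,
    (relEnt_map_le P R hT).trans_lt hPfin, fun ρ _ hρ0 hρ1 => ?_⟩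
  have hρT := Measure.map_comp_eq_self_of_map_eq_dirac κ hT hκ ρ
  calc relEnt (P.map _) (R.map _) ≤ relEnt P R := relEnt_map_le P R hT
    _ ≤ relEnt (κ ∘ₘ ρ) R := hPmin _ inferInstance
        (by rw [← Measure.fst_map_prodMk hX1, hρT]; exact hρ0)
        (by rw [← Measure.snd_map_prodMk hX0, hρT]; exact hρ1)
    _ = relEnt (κ ∘ₘ ρ) (κ ∘ₘ R.map fun ω => (X 0 ω, X 1 ω)) := by rw [← hR]
    _ ≤ relEnt ρ (R.map _) := relEnt_comp_le κ ρ _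

lemma IsStatSol.isDynSol_comp [IsProbabilityMeasure R] (hX0 : Measurable (X 0))
    (hX1 : Measurable (X 1)) (κ : Kernel (𝒳 × 𝒳) Ω) [IsMarkovKernel κ]
    (hR : R = κ ∘ₘ R.map fun ω => (X 0 ω, X 1 ω))
    (hκ : ∀ y, (κ y).map (fun ω => (X 0 ω, X 1 ω)) = Measure.dirac y)
    {π : Measure (𝒳 × 𝒳)} (hπ : IsStatSol (R.map fun ω => (X 0 ω, X 1 ω)) μ₀ μ₁ π) :
    IsDynSol X R μ₀ μ₁ (κ ∘ₘ π) := by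
  have hT : Measurable fun ω => (X 0 ω, X 1 ω) := hX0.prodMk hX1
  have := Measure.isProbabilityMeasure_map (μ := R) hT.aemeasurable
  obtain ⟨_, hπ0, hπ1, hπfin, hπmin⟩ := hπ
  have hπT := Measure.map_comp_eq_self_of_map_eq_dirac κ hT hκ π
  have hle : relEnt (κ ∘ₘ π) R ≤ relEnt π (R.map _) := calc
    relEnt (κ ∘ₘ π) R = relEnt (κ ∘ₘ π) (κ ∘ₘ R.map fun ω => (X 0 ω, X 1 ω)) := by rw [← hR]
    _ ≤ relEnt π (R.map _) := relEnt_comp_le κ π _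
  refine ⟨inferInstance, by rw [← Measure.fst_map_prodMk hX1, hπT]; exact hπ0,
    by rw [← Measure.snd_map_prodMk hX0, hπT]; exact hπ1, hle.trans_lt hπfin,
    fun Q _ hQ0 hQ1 => ?_⟩
  calc relEnt (κ ∘ₘ π) R ≤ relEnt π (R.map _) := hle
    _ ≤ relEnt (Q.map _) (R.map _) := hπmin _ (Measure.isProbabilityMeasure_map hT.aemeasurable)
        ((Measure.fst_map_prodMk hX1).trans hQ0) ((Measure.snd_map_prodMk hX0).trans hQ1)
    _ ≤ relEnt Q R := relEnt_map_le Q R hT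

end Schroedinger

theorem schroedinger_problem_general
    [MeasurableSpace Ω] [MeasurableSpace 𝒳]
    (X : ℝ → Ω → 𝒳) (hX : ∀ t, Measurable (X t))
    (R : Measure Ω) [IsProbabilityMeasure R]
    (B : 𝒳 × 𝒳 → Measure Ω) (hB : IsBridgeSystem X R B)
    (μ₀ μ₁ : Measure 𝒳) :
    (∀ P₁ P₂ : Measure Ω, IsDynSol X R μ₀ μ₁ P₁ → IsDynSol X R μ₀ μ₁ P₂ → P₁ = P₂) ∧
    (∀ π₁ π₂ : Measure (𝒳 × 𝒳),
      IsStatSol (R.map (fun ω => (X 0 ω, X 1 ω))) μ₀ μ₁ π₁ →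
      IsStatSol (R.map (fun ω => (X 0 ω, X 1 ω))) μ₀ μ₁ π₂ → π₁ = π₂) ∧
    (∀ P : Measure Ω, IsDynSol X R μ₀ μ₁ P →
      IsStatSol (R.map (fun ω => (X 0 ω, X 1 ω))) μ₀ μ₁
        (P.map (fun ω => (X 0 ω, X 1 ω)))) ∧
    (∀ π : Measure (𝒳 × 𝒳),
      IsStatSol (R.map (fun ω => (X 0 ω, X 1 ω))) μ₀ μ₁ π →
      IsDynSol X R μ₀ μ₁ (π.bind B)) := by
  obtain ⟨hBm, hBp, hpin, hR⟩ := hB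
  have hT : Measurable fun ω => (X 0 ω, X 1 ω) := (hX 0).prodMk (hX 1)
  have := Measure.isProbabilityMeasure_map (μ := R) hT.aemeasurable
  let κ : Kernel (𝒳 × 𝒳) Ω := ⟨B, hBm⟩
  have : IsMarkovKernel κ := ⟨hBp⟩
  have hκ (y : 𝒳 × 𝒳) : (κ y).map (fun ω => (X 0 ω, X 1 ω)) = Measure.dirac y :=
    Measure.map_eq_dirac_of_measure_preimage_singleton hT <| by
      convert hpin y using 2
      · rfl
      · ext ω
        simp [Prod.ext_iff]
  exact ⟨fun _ _ => IsDynSol.eq (hX 0) (hX 1), fun _ _ => IsStatSol.eq,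
    fun _ => IsDynSol.isStatSol_map (hX 0) (hX 1) κ hR hκ,
    fun _ => IsStatSol.isDynSol_comp (hX 0) (hX 1) κ hR hκ⟩

/-- the dynamical and static Schrödinger problems have at most one solution
each; the endpoint marginal of a dynamical solution solves the static problem, and conversely
the mixture of the bridges of `R` by a static solution solves the dynamical problem. -/
theorem schroedinger_problem
    [MeasurableSpace Ω] [MeasurableSpace 𝒳]
    (X : ℝ → Ω → 𝒳) (hX : ∀ t, Measurable (X t))
    (R : Measure Ω) [IsProbabilityMeasure R]
    (B : 𝒳 × 𝒳 → Measure Ω) (hB : IsBridgeSystem X R B)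
    (μ₀ μ₁ : Measure 𝒳) [IsProbabilityMeasure μ₀] [IsProbabilityMeasure μ₁] :
    (∀ P₁ P₂ : Measure Ω, IsDynSol X R μ₀ μ₁ P₁ → IsDynSol X R μ₀ μ₁ P₂ → P₁ = P₂) ∧
    (∀ π₁ π₂ : Measure (𝒳 × 𝒳),
      IsStatSol (R.map (fun ω => (X 0 ω, X 1 ω))) μ₀ μ₁ π₁ →
      IsStatSol (R.map (fun ω => (X 0 ω, X 1 ω))) μ₀ μ₁ π₂ → π₁ = π₂) ∧
    (∀ P : Measure Ω, IsDynSol X R μ₀ μ₁ P →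
      IsStatSol (R.map (fun ω => (X 0 ω, X 1 ω))) μ₀ μ₁
        (P.map (fun ω => (X 0 ω, X 1 ω)))) ∧
    (∀ π : Measure (𝒳 × 𝒳),
      IsStatSol (R.map (fun ω => (X 0 ω, X 1 ω))) μ₀ μ₁ π →
      IsDynSol X R μ₀ μ₁ (π.bind B)) :=
  schroedinger_problem_general X hX R B hB μ₀ μ₁
end
end
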